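/- Let A be a real symmetric (or Hermitian) negative definite t × t matrix. Then there exists a diagonal matrix D with strictly positive diagonal entries such that D A D has all row sums strictly negative. -/

import Mathlib

/-!
Apply everything to `M = -A`, which is positive definite. A minimiser `x` of the quadratic form
`y ↦ yᵀ M y` on the standard simplex satisfies the first-order conditions `(M x)ᵢ ≥ xᵀ M x > 0`,
obtained by moving from `x` towards the vertex `eᵢ`. So `x ≥ 0` lies in the open set
`{d | M d > 0}`, which therefore meets the open positive orthant, whose closure contains `x`.
-/

open Matrix Set

theorem nonneg_of_forall_mem_Ioc_nonneg_add_mul {a b : ℝ}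
    (h : ∀ s ∈ Ioc (0 : ℝ) 1, 0 ≤ a + s * b) : 0 ≤ a := by
  have hclosed : IsClosed {s : ℝ | 0 ≤ a + s * b} := isClosed_le continuous_const (by fun_prop)
  have h0 : (0 : ℝ) ∈ closure (Ioc 0 1) := by
    rw [closure_Ioc zero_ne_one]
    exact ⟨le_rfl, zero_le_one⟩
  simpa using hclosed.closure_subset_iff.mpr h h0

namespace Matrix

variable {n : Type*} [Fintype n]

theorem dotProduct_mulVec_add_smul {R : Type*} [CommRing R] {M : Matrix n n R} (hM : M.IsSymm)
    (x v : n → R) (s : R) :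
    (x + s • v) ⬝ᵥ M *ᵥ (x + s • v) =
      x ⬝ᵥ M *ᵥ x + 2 * s * (v ⬝ᵥ M *ᵥ x) + s ^ 2 * (v ⬝ᵥ M *ᵥ v) := by
  have hsymm : x ⬝ᵥ M *ᵥ v = v ⬝ᵥ M *ᵥ x := by
    rw [dotProduct_mulVec, ← mulVec_transpose, hM.eq, dotProduct_comm]
  simp only [add_dotProduct, dotProduct_add, mulVec_add, mulVec_smul, smul_dotProduct,
    dotProduct_smul, hsymm, smul_eq_mul]
  ring

theorem dotProduct_mulVec_le_mulVec_of_isMinOn_stdSimplex [DecidableEq n] {M : Matrix n n ℝ}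
    (hM : M.IsSymm) {x : n → ℝ} (hx : x ∈ stdSimplex ℝ n)
    (hmin : IsMinOn (fun y ↦ y ⬝ᵥ M *ᵥ y) (stdSimplex ℝ n) x) (i : n) :
    x ⬝ᵥ M *ᵥ x ≤ (M *ᵥ x) i := by
  set v := Pi.single i 1 - x
  have hv : v ⬝ᵥ M *ᵥ x = (M *ᵥ x) i - x ⬝ᵥ M *ᵥ x := by
    simp [v, sub_dotProduct]
  suffices 0 ≤ 2 * (v ⬝ᵥ M *ᵥ x) by linarith
  refine nonneg_of_forall_mem_Ioc_nonneg_add_mul (b := v ⬝ᵥ M *ᵥ v) fun s hs ↦ ?_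
  have hmem : x + s • v ∈ stdSimplex ℝ n :=
    (convex_stdSimplex ℝ n).add_smul_sub_mem hx (single_mem_stdSimplex ℝ i)
      (Ioc_subset_Icc_self hs)
  have hle := hmin hmem
  simp only [mem_ofPred_eq, dotProduct_mulVec_add_smul hM] at hle
  nlinarith [hs.1]

theorem PosDef.exists_mem_stdSimplex_mulVec_pos [Nonempty n] {M : Matrix n n ℝ} (hM : M.PosDef) :
    ∃ x ∈ stdSimplex ℝ n, ∀ i, 0 < (M *ᵥ x) i := by
  classical
  have hcont : Continuous fun y : n → ℝ ↦ y ⬝ᵥ M *ᵥ y := by fun_prop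
  obtain ⟨x, hx, hmin⟩ := (isCompact_stdSimplex ℝ n).exists_isMinOn
    ⟨_, single_mem_stdSimplex ℝ (Classical.arbitrary n)⟩ hcont.continuousOn
  have hx0 : x ≠ 0 := by
    rintro rfl
    simpa using hx.2
  have hpos : 0 < x ⬝ᵥ M *ᵥ x := by simpa using hM.dotProduct_mulVec_pos hx0
  -- over `ℝ`, `IsHermitian` unfolds to `IsSymm`
  exact ⟨x, hx, fun i ↦ hpos.trans_le
    (dotProduct_mulVec_le_mulVec_of_isMinOn_stdSimplex hM.isHermitian hx hmin i)⟩

theorem PosDef.exists_pos_mulVec_pos {M : Matrix n n ℝ} (hM : M.PosDef) :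
    ∃ d : n → ℝ, (∀ i, 0 < d i) ∧ ∀ i, 0 < (M *ᵥ d) i := by
  cases isEmpty_or_nonempty n
  · exact ⟨0, isEmptyElim, isEmptyElim⟩
  obtain ⟨x, hx, hMx⟩ := hM.exists_mem_stdSimplex_mulVec_pos
  have hopen : IsOpen (M.mulVec ⁻¹' univ.pi fun _ ↦ Ioi 0) :=
    (isOpen_set_pi finite_univ fun _ _ ↦ isOpen_Ioi).preimage (by fun_prop)
  have hclosure : x ∈ closure (univ.pi fun _ ↦ Ioi (0 : ℝ)) := by
    rw [closure_pi_set]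
    exact fun i _ ↦ by simpa [closure_Ioi] using hx.1 i
  obtain ⟨d, hMd, hd⟩ := mem_closure_iff.mp hclosure _ hopen (by simpa using hMx)
  exact ⟨d, by simpa using hd, by simpa using hMd⟩

end Matrix

theorem stmt5_general {t : ℕ} (A : Matrix (Fin t) (Fin t) ℝ)
    (hneg : (-A).PosDef) :
    ∃ d : Fin t → ℝ, (∀ i, 0 < d i) ∧
      ∀ i, ∑ j, d i * A i j * d j < 0 := by
  obtain ⟨d, hd, hAd⟩ := hneg.exists_pos_mulVec_pos
  refine ⟨d, hd, fun i ↦ ?_⟩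
  have hrow : ∑ j, d i * A i j * d j = -(d i * ((-A) *ᵥ d) i) := by
    simp [mulVec, dotProduct, Finset.mul_sum, mul_assoc]
  rw [hrow, neg_neg_iff_pos]
  exact mul_pos (hd i) (hAd i)

/-- For a symmetric negative definite real matrix `A`, there is a diagonal
matrix `D` with strictly positive entries such that `D A D` has all row sums
strictly negative. -/
theorem stmt5 {t : ℕ} (A : Matrix (Fin t) (Fin t) ℝ)
    (hsymm : A.IsSymm) (hneg : (-A).PosDef) :
    ∃ d : Fin t → ℝ, (∀ i, 0 < d i) ∧
      ∀ i, ∑ j, d i * A i j * d j < 0 :=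
  stmt5_general A hneg
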